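/- Let μ be a probability measure on ℂ with compact support. If m_μ(z) = 0 for some z ∉ supp(μ), where m_μ(z) := ∫_ℂ dμ(x)/(z − x) is the Cauchy–Stieltjes transform of μ, then z lies in the convex hull of supp(μ). -/

import Mathlib

/-!
If `z` lies outside the convex hull `K` of the support, then `K`, being compact by Carathéodory's
theorem, is strictly separated from `z` by a real linear functional, which we write as
`v ↦ ⟪w, v⟫`. Since `Re (w / v) = ⟪w, v⟫ / |v|²`, the function `x ↦ Re (w / (z - x))` is then
positive on the support, so `Re (w · m_μ(z)) > 0`, contradicting `m_μ(z) = 0`.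
-/

open MeasureTheory

noncomputable section

/-- The support of a measure on ℂ: points all of whose neighborhoods have positive measure. -/
def measSupp (μ : Measure ℂ) : Set ℂ := {x | ∀ U ∈ nhds x, μ U ≠ 0}

/-- The Cauchy–Stieltjes transform m_μ(z) = ∫ dμ(x)/(z − x). -/
def stieltjes (μ : Measure ℂ) (z : ℂ) : ℂ := ∫ x, (z - x)⁻¹ ∂μ

open Set Finset Module

section ConvexHull

variable {E : Type*} [AddCommGroup E] [Module ℝ E]

lemma sum_smul_mem_convexHull_of_mem_stdSimplex {ι : Type*} [Fintype ι] {s : Set E}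
    {w : ι → ℝ} {p : ι → E} (hw : w ∈ stdSimplex ℝ ι) (hp : ∀ i, p i ∈ s) :
    ∑ i, w i • p i ∈ convexHull ℝ s :=
  (convex_convexHull ℝ s).sum_mem (fun i _ => hw.1 i) hw.2
    (fun i _ => subset_convexHull ℝ s (hp i))

lemma exists_sum_smul_eq_of_mem_convexHull [FiniteDimensional ℝ E] {s : Set E} {x : E}
    (hx : x ∈ convexHull ℝ s) :
    ∃ n ≤ finrank ℝ E + 1, ∃ w ∈ stdSimplex ℝ (Fin n), ∃ p : Fin n → E,
      (∀ i, p i ∈ s) ∧ ∑ i, w i • p i = x := by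
  obtain ⟨ι, _, p, w, hps, hp, hw0, hw1, hwx⟩ := eq_pos_convex_span_of_mem_convexHull hx
  let e := Fintype.equivFin ι
  refine ⟨Fintype.card ι, hp.card_le_finrank_succ.trans (by simpa using Submodule.finrank_le _),
    w ∘ e.symm, ⟨fun i => (hw0 _).le, ?_⟩, p ∘ e.symm, fun i => hps (mem_range_self _), ?_⟩
  · simpa [Function.comp_def, e.symm.sum_comp] using hw1
  · simpa [Function.comp_def, e.symm.sum_comp (fun i => w i • p i)] using hwx

variable [TopologicalSpace E] [IsTopologicalAddGroup E] [ContinuousSMul ℝ E]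

lemma IsCompact.convexHull [FiniteDimensional ℝ E] {s : Set E} (hs : IsCompact s) :
    IsCompact (convexHull ℝ s) := by
  have hhull : _root_.convexHull ℝ s = ⋃ n : Fin (finrank ℝ E + 2),
      (fun q : (Fin n → ℝ) × (Fin n → E) => ∑ i, q.1 i • q.2 i) ''
        (stdSimplex ℝ (Fin n) ×ˢ univ.pi fun _ => s) := by
    refine Subset.antisymm (fun x hx => ?_) (iUnion_subset fun n => ?_)
    · obtain ⟨n, hn, w, hw, p, hp, rfl⟩ := exists_sum_smul_eq_of_mem_convexHull hx
      exact mem_iUnion.2 ⟨⟨n, by omega⟩, (w, p), ⟨hw, fun i _ => hp i⟩, rfl⟩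
    · rintro _ ⟨⟨w, p⟩, ⟨hw, hp⟩, rfl⟩
      exact sum_smul_mem_convexHull_of_mem_stdSimplex hw fun i => hp i (mem_univ i)
  rw [hhull]
  exact isCompact_iUnion fun n => ((isCompact_stdSimplex ℝ _).prod
    (isCompact_univ_pi fun _ => hs)).image (by fun_prop)

end ConvexHull

lemma Complex.re_mul_inv_pos_of_inner_pos {w v : ℂ} (h : 0 < inner ℝ w v) :
    0 < (w * v⁻¹).re := by
  rw [Complex.inner] at h
  have hv : v ≠ 0 := by rintro rfl; simp at h
  have hre : (w * v⁻¹).re = (v * (starRingEnd ℂ) w).re / Complex.normSq v := by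
    rw [Complex.inv_def, ← mul_assoc, Complex.re_mul_ofReal, div_eq_mul_inv]
    congr 1
    rw [← Complex.conj_re, map_mul, Complex.conj_conj, mul_comm]
  rw [hre]
  exact div_pos h (Complex.normSq_pos.2 hv)

lemma integral_ne_zero_of_ae_re_pos {α 𝕜 : Type*} [RCLike 𝕜] [MeasurableSpace α]
    {μ : Measure α} [IsProbabilityMeasure μ] {g : α → 𝕜} (hg : Integrable g μ)
    (hpos : ∀ᵐ x ∂μ, 0 < RCLike.re (g x)) :
    ∫ x, g x ∂μ ≠ 0 := by
  intro h
  have hre : ∫ x, RCLike.re (g x) ∂μ = 0 := by simpa [h] using integral_re hg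
  have hnonpos := measure_le_integral_pos hg.re
  rw [hre] at hnonpos
  simp only [ae_iff, not_lt] at hpos
  exact hnonpos.ne' hpos

lemma measSupp_eq_support (μ : Measure ℂ) : measSupp μ = μ.support := by
  ext x
  simp [measSupp, Measure.mem_support_iff_forall, pos_iff_ne_zero]

lemma ae_mem_measSupp (μ : Measure ℂ) : ∀ᵐ x ∂μ, x ∈ measSupp μ := by
  rw [measSupp_eq_support]
  exact Measure.support_mem_ae

lemma integrable_inv_sub_of_notMem_measSupp {μ : Measure ℂ} [IsFiniteMeasure μ] {z : ℂ}
    (hK : IsCompact (measSupp μ)) (hz : z ∉ measSupp μ) :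
    Integrable (fun x => (z - x)⁻¹) μ := by
  have hcont : ContinuousOn (fun x => (z - x)⁻¹) (measSupp μ) :=
    (continuousOn_const.sub continuousOn_id).inv₀ fun x hx =>
      sub_ne_zero.2 (ne_of_mem_of_not_mem hx hz).symm
  have hint := hcont.integrableOn_compact (μ := μ) hK
  rwa [IntegrableOn, Measure.restrict_eq_self_of_ae_mem (ae_mem_measSupp μ)] at hint

/-- **Proposition.**  Let μ be a compactly supported probability measure on ℂ.
If m_μ(z) = 0 for some z ∉ supp(μ), then z lies in the convex hull of supp(μ). -/
theorem stieltjes_zero_mem_convexHull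
    (μ : Measure ℂ) [IsProbabilityMeasure μ] (hsupp : IsCompact (measSupp μ))
    (z : ℂ) (hz : z ∉ measSupp μ) (h0 : stieltjes μ z = 0) :
    z ∈ convexHull ℝ (measSupp μ) := by
  by_contra hzK
  obtain ⟨f, u, hfK, hfz⟩ := geometric_hahn_banach_closed_point (convex_convexHull ℝ _)
    hsupp.convexHull.isClosed hzK
  set w := (InnerProductSpace.toDual ℝ ℂ).symm f
  have hpos : ∀ x ∈ measSupp μ, 0 < inner ℝ w (z - x) := fun x hx => by
    rw [InnerProductSpace.toDual_symm_apply, map_sub]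
    linarith [hfK x (subset_convexHull ℝ _ hx)]
  refine integral_ne_zero_of_ae_re_pos
    ((integrable_inv_sub_of_notMem_measSupp hsupp hz).const_mul w) ?_ ?_
  · filter_upwards [ae_mem_measSupp μ] with x hx
    exact Complex.re_mul_inv_pos_of_inner_pos (hpos x hx)
  · rw [integral_const_mul]
    exact mul_eq_zero_of_right w h0

end
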